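/- There exists a unique positive real number α satisfying √(2π)·(1 − α²)·e^{α²/2}·Φ(α) = α, where Φ is the standard normal cumulative distribution function. -/

import Mathlib

open Real MeasureTheory

/-!
The ratio `M x = Φ(x) / φ(x) = √(2π) e^{x²/2} Φ(x)` satisfies `M' = x M + 1`, so the residual
`F x = (1 - x²) M x - x` has derivative `-x (1 + x²) M x - x² < 0` for `x > 0`.
Since `F 0 = √(2π) Φ(0) > 0` and `F 1 = -1`, `F` has exactly one positive zero.
-/

noncomputable def stdNormalCDF (y : ℝ) : ℝ :=
  (Real.sqrt (2 * Real.pi))⁻¹ * ∫ u in Set.Iic y, Real.exp (-u ^ 2 / 2)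

lemma integrable_exp_neg_sq_div_two : Integrable fun u : ℝ => Real.exp (-u ^ 2 / 2) := by
  convert integrable_exp_neg_mul_sq (by norm_num : (0 : ℝ) < 1 / 2) using 3
  ring

lemma sqrt_two_pi_pos : 0 < Real.sqrt (2 * Real.pi) :=
  Real.sqrt_pos.mpr (by positivity)

lemma stdNormalCDF_pos (y : ℝ) : 0 < stdNormalCDF y := by
  refine mul_pos (inv_pos.mpr sqrt_two_pi_pos) ?_
  rw [setIntegral_pos_iff_support_of_nonneg_ae
    (Filter.Eventually.of_forall fun u => (Real.exp_pos _).le)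
    integrable_exp_neg_sq_div_two.integrableOn]
  have hsupport : (Function.support fun u : ℝ => Real.exp (-u ^ 2 / 2)) = Set.univ :=
    Set.eq_univ_of_forall fun u => (Real.exp_pos _).ne'
  simp [hsupport, Real.volume_Iic]

lemma hasDerivAt_stdNormalCDF (y : ℝ) :
    HasDerivAt stdNormalCDF ((Real.sqrt (2 * Real.pi))⁻¹ * Real.exp (-y ^ 2 / 2)) y := by
  have hint := integrable_exp_neg_sq_div_two.integrableOn (s := Set.Iic (0 : ℝ))
  have hsplit : stdNormalCDF = fun x => (Real.sqrt (2 * Real.pi))⁻¹ *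
      ((∫ u in Set.Iic 0, Real.exp (-u ^ 2 / 2)) + ∫ u in (0 : ℝ)..x, Real.exp (-u ^ 2 / 2)) := by
    funext x
    rw [← intervalIntegral.integral_Iic_sub_Iic hint
      integrable_exp_neg_sq_div_two.integrableOn, add_sub_cancel]
    rfl
  have hcont : Continuous fun u : ℝ => Real.exp (-u ^ 2 / 2) := by fun_prop
  rw [hsplit]
  exact ((intervalIntegral.integral_hasDerivAt_right
    integrable_exp_neg_sq_div_two.intervalIntegrable
    (hcont.stronglyMeasurableAtFilter _ _) hcont.continuousAt).const_add _).const_mul _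

noncomputable def cdfDivPdf (x : ℝ) : ℝ :=
  Real.sqrt (2 * Real.pi) * Real.exp (x ^ 2 / 2) * stdNormalCDF x

lemma cdfDivPdf_pos (x : ℝ) : 0 < cdfDivPdf x :=
  mul_pos (mul_pos sqrt_two_pi_pos (Real.exp_pos _)) (stdNormalCDF_pos x)

lemma hasDerivAt_cdfDivPdf (x : ℝ) : HasDerivAt cdfDivPdf (x * cdfDivPdf x + 1) x := by
  have hexp : HasDerivAt (fun t : ℝ => Real.exp (t ^ 2 / 2)) (Real.exp (x ^ 2 / 2) * x) x := by
    convert ((hasDerivAt_pow 2 x).div_const 2).exp using 1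
    ring
  refine ((hexp.const_mul (Real.sqrt (2 * Real.pi))).mul
    (hasDerivAt_stdNormalCDF x)).congr_deriv ?_
  have hinv : Real.exp (x ^ 2 / 2) * Real.exp (-x ^ 2 / 2) = 1 := by
    rw [← Real.exp_add]; simp [neg_div]
  have hsqrt : Real.sqrt (2 * Real.pi) * (Real.sqrt (2 * Real.pi))⁻¹ = 1 :=
    mul_inv_cancel₀ sqrt_two_pi_pos.ne'
  rw [cdfDivPdf]
  linear_combination (Real.exp (x ^ 2 / 2) * Real.exp (-x ^ 2 / 2)) * hsqrt + hinv

noncomputable def boundaryResidual (x : ℝ) : ℝ :=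
  (1 - x ^ 2) * cdfDivPdf x - x

lemma hasDerivAt_boundaryResidual (x : ℝ) :
    HasDerivAt boundaryResidual (-(x * (1 + x ^ 2) * cdfDivPdf x) - x ^ 2) x := by
  refine ((((hasDerivAt_pow 2 x).const_sub 1).mul (hasDerivAt_cdfDivPdf x)).sub
    (hasDerivAt_id x)).congr_deriv ?_
  push_cast
  ring

lemma continuous_boundaryResidual : Continuous boundaryResidual :=
  continuous_iff_continuousAt.mpr fun x => (hasDerivAt_boundaryResidual x).continuousAt

lemma strictAntiOn_boundaryResidual : StrictAntiOn boundaryResidual (Set.Ici 0) := by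
  refine strictAntiOn_of_deriv_neg (convex_Ici 0) continuous_boundaryResidual.continuousOn ?_
  intro x hx
  rw [interior_Ici, Set.mem_Ioi] at hx
  have hM := cdfDivPdf_pos x
  have hslope : 0 < x * (1 + x ^ 2) * cdfDivPdf x := by positivity
  rw [(hasDerivAt_boundaryResidual x).deriv]
  linarith [sq_nonneg x]

lemma boundaryResidual_zero_pos : 0 < boundaryResidual 0 := by
  simpa [boundaryResidual] using cdfDivPdf_pos 0

lemma boundaryResidual_one : boundaryResidual 1 = -1 := by
  simp [boundaryResidual]

theorem stmt_0 :
    ∃! α : ℝ, 0 < α ∧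
      Real.sqrt (2 * Real.pi) * (1 - α ^ 2) * Real.exp (α ^ 2 / 2) * stdNormalCDF α = α := by
  have hiff : ∀ α, Real.sqrt (2 * Real.pi) * (1 - α ^ 2) * Real.exp (α ^ 2 / 2) *
      stdNormalCDF α = α ↔ boundaryResidual α = 0 := by
    intro α
    rw [boundaryResidual, cdfDivPdf, sub_eq_zero]
    ring_nf
  simp only [hiff]
  obtain ⟨α, hα, hzero⟩ : (0 : ℝ) ∈ boundaryResidual '' Set.Ioo 0 1 :=
    intermediate_value_Ioo' zero_le_one continuous_boundaryResidual.continuousOn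
      ⟨by simp [boundaryResidual_one], boundaryResidual_zero_pos⟩
  refine ⟨α, ⟨hα.1, hzero⟩, fun β ⟨hβ, hβzero⟩ => ?_⟩
  exact strictAntiOn_boundaryResidual.injOn hβ.le hα.1.le (hβzero.trans hzero.symm)
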